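/- arXiv:1605.05530 — 5 statements merged into one kernel-verified Lean document; each statement's English description precedes it below -/
import Mathlib

section
/- Let τ_Σ : (0,R] × (ℝ/2πℤ) → ℝ be C¹ with δ := 1 - 2∂τ_Σ/∂r - ((1/r)∂τ_Σ/∂θ)² > 0 everywhere. Let c = (τ(s), r(s), θ(s)) be a smooth future causal curve in the tube {0 < r ≤ R} of 𝔼^{1,2}_0, i.e. satisfying τ' > 0, r' ≥ 0, and 2τ'r' ≥ (r')² + r²(θ')² everywhere. Then the function f(s) = τ(s) - τ_Σ(r(s), θ(s)) is strictly increasing; in particular c meets the graph of τ_Σ at most once. -/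
/-!
Along the curve, `f' = τ' - (∂_r τ_Σ) r' - (∂_θ τ_Σ) θ'` is the value of the covector
`dτ - dτ_Σ` on the future causal tangent vector, and spacelikeness of the graph (`δ > 0`) makes
this covector positive on every future causal vector: writing `c = (1/r) ∂_θ τ_Σ`, AM-GM gives
`2 (∂_θ τ_Σ) r' θ' ≤ c² r'² + r² θ'²`, so `2 r' f' ≥ δ r'² > 0` when `r' > 0`, while `r' = 0`
forces `θ' = 0` and `f' = τ' > 0`.
-/

namespace BTZ

/-- The tangent vector `(t, x, y) = (τ', r', θ')` at radius `ρ` is future causal. -/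
def IsFutureCausal (ρ t x y : ℝ) : Prop :=
  0 < t ∧ 0 ≤ x ∧ x ^ 2 + ρ ^ 2 * y ^ 2 ≤ 2 * t * x

/-- The graph of a function with partial derivatives `(a, b) = (∂_r τ_Σ, ∂_θ τ_Σ)` at radius `ρ`
is spacelike. -/
def IsSpacelikeSlope (ρ a b : ℝ) : Prop :=
  0 < 1 - 2 * a - ((1 / ρ) * b) ^ 2

theorem IsFutureCausal.eq_zero_of_radial_eq_zero {ρ t x y : ℝ} (hρ : 0 < ρ)
    (h : IsFutureCausal ρ t x y) (hx : x = 0) : y = 0 := by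
  obtain ⟨-, -, hc⟩ := h
  subst hx
  have : (ρ * y) ^ 2 = 0 := le_antisymm (by linarith) (sq_nonneg _)
  simpa [hρ.ne'] using this

theorem IsSpacelikeSlope.sub_pos_of_isFutureCausal {ρ a b t x y : ℝ} (hρ : 0 < ρ)
    (hS : IsSpacelikeSlope ρ a b) (hC : IsFutureCausal ρ t x y) :
    0 < t - (a * x + b * y) := by
  have ⟨ht, hx, hc⟩ := hC
  rcases hx.eq_or_lt with hx0 | hxpos
  · rw [hC.eq_zero_of_radial_eq_zero hρ hx0.symm, ← hx0]
    simpa using ht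
  set c := (1 / ρ) * b
  have hS : 0 < 1 - 2 * a - c ^ 2 := hS
  have hb : (c * x) * (ρ * y) = b * x * y := by
    simp only [c]; field_simp
  have amgm := two_mul_le_add_sq (c * x) (ρ * y)
  have key : 2 * x * (a * x + b * y) < 2 * x * t := by
    calc 2 * x * (a * x + b * y) = 2 * a * x ^ 2 + 2 * (c * x) * (ρ * y) := by
          linear_combination (-2) * hb
      _ ≤ (2 * a + c ^ 2) * x ^ 2 + ρ ^ 2 * y ^ 2 := by linarith
      _ < x ^ 2 + ρ ^ 2 * y ^ 2 := by linarith [mul_pos hS (pow_pos hxpos 2)]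
      _ ≤ 2 * x * t := by linarith
  linarith [lt_of_mul_lt_mul_left key (by positivity)]

end BTZ

open BTZ in
theorem btz_graph_acausal_general (R : ℝ)
    (τS τSr τSθ : ℝ → ℝ → ℝ)
    (hδ : ∀ r θ : ℝ, 0 < r → r ≤ R →
      0 < 1 - 2 * τSr r θ - ((1/r) * τSθ r θ)^2)
    (τ r θ τ' r' θ' : ℝ → ℝ)
    (hτ : ∀ s, HasDerivAt τ (τ' s) s)
    (hrange : ∀ s, 0 < r s ∧ r s ≤ R)
    (hcausal : ∀ s, 0 < τ' s ∧ 0 ≤ r' s ∧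
      (r' s)^2 + (r s)^2 * (θ' s)^2 ≤ 2 * τ' s * r' s)
    (hchain : ∀ s, HasDerivAt (fun u => τS (r u) (θ u))
      (τSr (r s) (θ s) * r' s + τSθ (r s) (θ s) * θ' s) s) :
    StrictMono (fun s => τ s - τS (r s) (θ s))
    ∧ ∀ s t : ℝ, τ s = τS (r s) (θ s) → τ t = τS (r t) (θ t) → s = t := by
  have hmono : StrictMono (fun s => τ s - τS (r s) (θ s)) :=
    strictMono_of_hasDerivAt_pos (fun s => (hτ s).sub (hchain s)) fun s =>
      IsSpacelikeSlope.sub_pos_of_isFutureCausal (hrange s).1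
        (hδ _ _ (hrange s).1 (hrange s).2) (hcausal s)
  refine ⟨hmono, fun s t hs ht => hmono.injective ?_⟩
  simp only [hs, ht, sub_self]

/-- If the graph of `τ_Σ` is spacelike (`δ > 0`) in the BTZ tube `{0 < r ≤ R}`, then along any
smooth future causal curve `c = (τ, r, θ)` the function `s ↦ τ(s) - τ_Σ(r(s), θ(s))` is
strictly increasing; in particular the curve meets the graph at most once. -/
theorem btz_graph_acausal (R : ℝ) (hR : 0 < R)
    (τS τSr τSθ : ℝ → ℝ → ℝ)
    (hδ : ∀ r θ : ℝ, 0 < r → r ≤ R →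
      0 < 1 - 2 * τSr r θ - ((1/r) * τSθ r θ)^2)
    (τ r θ τ' r' θ' : ℝ → ℝ)
    (hτ : ∀ s, HasDerivAt τ (τ' s) s)
    (hr : ∀ s, HasDerivAt r (r' s) s)
    (hθ : ∀ s, HasDerivAt θ (θ' s) s)
    (hrange : ∀ s, 0 < r s ∧ r s ≤ R)
    (hcausal : ∀ s, 0 < τ' s ∧ 0 ≤ r' s ∧
      (r' s)^2 + (r s)^2 * (θ' s)^2 ≤ 2 * τ' s * r' s)
    (hchain : ∀ s, HasDerivAt (fun u => τS (r u) (θ u))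
      (τSr (r s) (θ s) * r' s + τSθ (r s) (θ s) * θ' s) s) :
    StrictMono (fun s => τ s - τS (r s) (θ s))
    ∧ ∀ s t : ℝ, τ s = τS (r s) (θ s) → τ t = τS (r t) (θ t) → s = t :=
  btz_graph_acausal_general R τS τSr τSθ hδ τ r θ τ' r' θ' hτ hrange hcausal hchain
end

section
/- Let τ^R : ℝ/2πℤ → ℝ be smooth, and define M = 1 + max_θ |(τ^R)'(θ)|² and τ_Σ(r,θ) = τ^R(θ) + M(1/r - 1/R) for (r,θ) ∈ (0,R] × ℝ/2πℤ. Then δ(r,θ) := 1 - 2∂τ_Σ/∂r - ((1/r)∂τ_Σ/∂θ)² > 1/r² for all (r,θ), and τ_Σ(R,θ) = τ^R(θ). -/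
/-! The choice `M ≥ 1 + max |(τ^R)'|²` makes the `-2 ∂τ_Σ/∂r = 2M/r²` term dominate both the
angular term `((τ^R)'/r)²` and `1/r²`; the maximum over one period bounds `|(τ^R)'|²` everywhere
because `(τ^R)'` inherits the periodicity of `τ^R`. -/

namespace Function

theorem Periodic.of_hasDerivAt {f f' : ℝ → ℝ} {c : ℝ} (hf : Periodic f c)
    (hd : ∀ x, HasDerivAt f (f' x) x) : Periodic f' c := fun x =>
  (hf.funext ▸ (hd (x + c)).comp_add_const x c).unique (hd x)

theorem Periodic.le_sSup_image_Icc {g : ℝ → ℝ} {c : ℝ} (hg : Periodic g c) (hc : 0 < c)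
    (hcont : Continuous g) (x : ℝ) : g x ≤ sSup (g '' Set.Icc 0 c) := by
  have himage : g '' Set.Icc 0 c = Set.range g := by
    simpa only [zero_add] using hg.image_Icc hc 0
  rw [himage]
  exact le_csSup (hg.compact_of_continuous hc.ne' hcont).bddAbove (Set.mem_range_self x)

end Function

theorem hasDerivAt_const_add_mul_one_div_sub (a M b : ℝ) {r : ℝ} (hr : r ≠ 0) :
    HasDerivAt (fun x : ℝ => a + M * (1 / x - b)) (-(M / r ^ 2)) r := by
  have h := (((hasDerivAt_inv hr).sub_const b).const_mul M).const_add a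
  rw [show -(M / r ^ 2) = M * -(r ^ 2)⁻¹ by ring]
  simpa only [one_div] using h

theorem one_div_sq_lt_of_one_add_sq_le {a M : ℝ} (hM : 1 + a ^ 2 ≤ M) (r : ℝ) :
    1 / r ^ 2 < 1 - 2 * (-(M / r ^ 2)) - ((1 / r) * a) ^ 2 := by
  have hexpand : 1 - 2 * (-(M / r ^ 2)) - ((1 / r) * a) ^ 2 - 1 / r ^ 2
      = 1 + (2 * M - a ^ 2 - 1) * (1 / r) ^ 2 := by ring
  have hnonneg : 0 ≤ (2 * M - a ^ 2 - 1) * (1 / r) ^ 2 :=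
    mul_nonneg (by nlinarith [sq_nonneg a]) (sq_nonneg _)
  linarith

theorem btz_explicit_extension_general (R : ℝ) (τR τR' : ℝ → ℝ)
    (hper : Function.Periodic τR (2 * Real.pi))
    (hd : ∀ θ : ℝ, HasDerivAt τR (τR' θ) θ)
    (hc : Continuous τR') :
    let M : ℝ := 1 + sSup ((fun θ => |τR' θ|^2) '' Set.Icc (0:ℝ) (2 * Real.pi))
    let τS : ℝ → ℝ → ℝ := fun r θ => τR θ + M * (1/r - 1/R)
    ∀ r ∈ Set.Ioc (0:ℝ) R, ∀ θ : ℝ,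
      HasDerivAt (fun x => τS x θ) (-(M / r^2)) r
      ∧ HasDerivAt (fun y => τS r y) (τR' θ) θ
      ∧ 1/r^2 < 1 - 2 * (-(M / r^2)) - ((1/r) * τR' θ)^2
      ∧ τS R θ = τR θ := by
  intro M τS r hr θ
  have hsq_le : |τR' θ| ^ 2 ≤ sSup ((fun θ => |τR' θ|^2) '' Set.Icc (0:ℝ) (2 * Real.pi)) :=
    ((hper.of_hasDerivAt hd).comp fun y => |y| ^ 2).le_sSup_image_Icc (by positivity)
      (by fun_prop) θ
  have hM : 1 + τR' θ ^ 2 ≤ M := by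
    rw [sq_abs] at hsq_le
    exact add_le_add_right hsq_le 1
  exact ⟨hasDerivAt_const_add_mul_one_div_sub _ _ _ hr.1.ne',
    (hd θ).add_const _, one_div_sq_lt_of_one_add_sq_le hM r, by simp [τS]⟩

/-- Explicit spacelike complete extension of a boundary curve: with
`M = 1 + max_θ |(τ^R)'(θ)|²` and `τ_Σ(r,θ) = τ^R(θ) + M(1/r - 1/R)`, we have
`δ > 1/r²` for all `0 < r ≤ R`, and `τ_Σ(R,θ) = τ^R(θ)`. -/
theorem btz_explicit_extension (R : ℝ) (hR : 0 < R) (τR τR' : ℝ → ℝ)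
    (hper : Function.Periodic τR (2 * Real.pi))
    (hd : ∀ θ : ℝ, HasDerivAt τR (τR' θ) θ)
    (hc : Continuous τR') :
    let M : ℝ := 1 + sSup ((fun θ => |τR' θ|^2) '' Set.Icc (0:ℝ) (2 * Real.pi))
    let τS : ℝ → ℝ → ℝ := fun r θ => τR θ + M * (1/r - 1/R)
    ∀ r ∈ Set.Ioc (0:ℝ) R, ∀ θ : ℝ,
      HasDerivAt (fun x => τS x θ) (-(M / r^2)) r
      ∧ HasDerivAt (fun y => τS r y) (τR' θ) θ
      ∧ 1/r^2 < 1 - 2 * (-(M / r^2)) - ((1/r) * τR' θ)^2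
      ∧ τS R θ = τR θ :=
  btz_explicit_extension_general R τR τR' hper hd hc
end

section
/- Let c = (τ(s), r(s), θ(s)) : ℝ → 𝔼^{1,2}_0 be a future causal curve in the tube {0 < r ≤ R} (so τ' > 0, r' ≥ 0, and (r')² + r²(θ')² ≤ 2τ'r'). If τ is bounded above on [0,∞), then θ' and r' are integrable on [0,∞); in particular r(s) and θ(s) converge as s → +∞. -/
open MeasureTheory Filter

/-- A future causal curve in the BTZ tube `{0 < r ≤ R}` whose `τ`-coordinate is bounded above
on `[0,∞)` has integrable `θ'` and `r'` there; in particular `r` and `θ` converge. -/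
theorem btz_bounded_tau_converges (R B : ℝ)
    (τ r θ τ' r' θ' : ℝ → ℝ)
    (hτ : ∀ s, HasDerivAt τ (τ' s) s)
    (hr : ∀ s, HasDerivAt r (r' s) s)
    (hθ : ∀ s, HasDerivAt θ (θ' s) s)
    (hcτ : Continuous τ') (hcr : Continuous r') (hcθ : Continuous θ')
    (hrange : ∀ s, 0 < r s ∧ r s ≤ R)
    (hcausal : ∀ s, 0 < τ' s ∧ 0 ≤ r' s ∧
      (r' s)^2 + (r s)^2 * (θ' s)^2 ≤ 2 * τ' s * r' s)
    (hbound : ∀ s, 0 ≤ s → τ s ≤ B) :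
    IntegrableOn θ' (Set.Ici 0) volume
    ∧ IntegrableOn r' (Set.Ici 0) volume
    ∧ (∃ l : ℝ, Tendsto r atTop (nhds l))
    ∧ (∃ l : ℝ, Tendsto θ atTop (nhds l)) := by
  have hr0 : 0 < r 0 := (hrange 0).1
  have hrmono : Monotone r := by
    apply monotone_of_deriv_nonneg (fun s => (hr s).differentiableAt)
    intro s
    rw [(hr s).deriv]
    exact (hcausal s).2.1
  -- FTC
  have ftc : ∀ (f f' : ℝ → ℝ), (∀ s, HasDerivAt f (f' s) s) → Continuous f' → ∀ s : ℝ,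
      ∫ t in (0:ℝ)..s, f' t = f s - f 0 := fun f f' hf hcf s =>
    intervalIntegral.integral_eq_sub_of_hasDerivAt (fun t _ => hf t)
      (hcf.intervalIntegrable 0 s)
  -- τ' integrable on Ioi 0
  have hτIoi : IntegrableOn τ' (Set.Ioi 0) volume := by
    apply integrableOn_Ioi_of_intervalIntegral_norm_bounded (B - τ 0) 0
      (fun i => hcτ.integrableOn_Ioc) (tendsto_id (α := ℝ))
    filter_upwards [eventually_ge_atTop (0:ℝ)] with i hi
    have hcongr : (∫ x in (0:ℝ)..(id i), ‖τ' x‖) = ∫ x in (0:ℝ)..i, τ' x := by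
      apply intervalIntegral.integral_congr
      intro x _
      exact abs_of_pos (hcausal x).1
    rw [hcongr, ftc τ τ' hτ hcτ i]
    have := hbound i hi
    linarith
  have hτIci : IntegrableOn τ' (Set.Ici 0) volume :=
    (integrableOn_Ici_iff_integrableOn_Ioi).2 hτIoi
  -- r' ≤ 2τ'
  have hr'le : ∀ s, r' s ≤ 2 * τ' s := by
    intro s
    obtain ⟨h1, h2, h3⟩ := hcausal s
    rcases eq_or_lt_of_le h2 with h | h
    · linarith
    · nlinarith [sq_nonneg (r s * θ' s), mul_pow (r s) (θ' s) 2]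
  have hrIci : IntegrableOn r' (Set.Ici 0) volume := by
    apply Integrable.mono' (hτIci.const_mul 2) (hcr.aestronglyMeasurable.restrict)
    exact ae_of_all _ fun s => by
      rw [Real.norm_eq_abs, abs_of_nonneg (hcausal s).2.1]; exact hr'le s
  -- θ' bound on Ici 0
  have hθ'le : ∀ s, 0 ≤ s → ‖θ' s‖ ≤ (r 0)⁻¹ * τ' s := by
    intro s hs
    obtain ⟨h1, h2, h3⟩ := hcausal s
    have hsq : (r s)^2 * (θ' s)^2 ≤ (τ' s)^2 := by nlinarith [sq_nonneg (r' s - τ' s)]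
    have hrs : r 0 ≤ r s := hrmono hs
    have key : r 0 * |θ' s| ≤ τ' s := by
      have ha : r 0 * |θ' s| ≤ r s * |θ' s| :=
        mul_le_mul_of_nonneg_right hrs (abs_nonneg _)
      have hb : (r s * |θ' s|)^2 ≤ (τ' s)^2 := by
        rw [mul_pow, sq_abs]; exact hsq
      nlinarith [mul_nonneg ((hrange s).1.le) (abs_nonneg (θ' s))]
    have habs : |θ' s| = (r 0)⁻¹ * (r 0 * |θ' s|) := by field_simp
    rw [Real.norm_eq_abs, habs]
    exact mul_le_mul_of_nonneg_left key (inv_nonneg.2 hr0.le)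
  have hθIci : IntegrableOn θ' (Set.Ici 0) volume := by
    apply Integrable.mono' (hτIci.const_mul ((r 0)⁻¹)) (hcθ.aestronglyMeasurable.restrict)
    exact (ae_restrict_iff' measurableSet_Ici).2 (ae_of_all _ hθ'le)
  refine ⟨hθIci, hrIci, ?_, ?_⟩
  · have htend := intervalIntegral_tendsto_integral_Ioi 0
      (hrIci.mono_set Set.Ioi_subset_Ici_self) (tendsto_id (α := ℝ))
    refine ⟨r 0 + ∫ t in Set.Ioi (0:ℝ), r' t, ?_⟩
    have := htend.const_add (r 0)
    refine this.congr fun s => ?_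
    rw [show (id s : ℝ) = s from rfl, ftc r r' hr hcr s]; ring
  · have htend := intervalIntegral_tendsto_integral_Ioi 0
      (hθIci.mono_set Set.Ioi_subset_Ici_self) (tendsto_id (α := ℝ))
    refine ⟨θ 0 + ∫ t in Set.Ioi (0:ℝ), θ' t, ?_⟩
    have := htend.const_add (θ 0)
    refine this.congr fun s => ?_
    rw [show (id s : ℝ) = s from rfl, ftc θ θ' hθ hcθ s]; ring
end

section
/- Define 𝒟 : ℝ × (0,∞) × ℝ → ℝ³ by 𝒟(τ, r, θ̃) = (τ + 2π²rθ̃², τ + 2π²rθ̃² - r, -2πrθ̃) (i.e. with θ = 2πθ̃). Then 𝒟 is injective, its image is {(t,x,y) ∈ ℝ³ : t - x > 0}, and 𝒟 is an isometry onto its image from the metric -2dτdr + dr² + r²dθ² (θ = 2πθ̃) to the Minkowski metric -dt² + dx² + dy². -/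
open Real

/-- The developing map `𝒟(τ,r,θ̃) = (τ + 2π²rθ̃², τ + 2π²rθ̃² - r, -2πrθ̃)` on `{r > 0}`
is injective, has image `{t - x > 0}`, and pulls the Minkowski metric `-dt² + dx² + dy²`
back to `-2dτdr + dr² + r²dθ²` (with `θ = 2πθ̃`). -/
theorem btz_developing_map :
    let D : ℝ × ℝ × ℝ → ℝ × ℝ × ℝ := fun p =>
      (p.1 + 2 * π^2 * p.2.1 * p.2.2^2,
       p.1 + 2 * π^2 * p.2.1 * p.2.2^2 - p.2.1,
       -(2 * π * p.2.1 * p.2.2))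
    let S : Set (ℝ × ℝ × ℝ) := {p | 0 < p.2.1}
    Set.InjOn D S
    ∧ D '' S = {q : ℝ × ℝ × ℝ | 0 < q.1 - q.2.1}
    ∧ ∀ p ∈ S, ∀ vτ vr vθ : ℝ,
        -(vτ + 2 * π^2 * (vr * p.2.2^2 + 2 * p.2.1 * p.2.2 * vθ))^2
        + ((vτ + 2 * π^2 * (vr * p.2.2^2 + 2 * p.2.1 * p.2.2 * vθ)) - vr)^2
        + (-(2 * π * (vr * p.2.2 + p.2.1 * vθ)))^2
        = -2 * vτ * vr + vr^2 + p.2.1^2 * (2 * π * vθ)^2 := by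
  intro D S
  have hπ : (π : ℝ) ≠ 0 := Real.pi_ne_zero
  refine ⟨?_, ?_, ?_⟩
  · rintro ⟨a, r, b⟩ hp ⟨a', r', b'⟩ hq h
    simp only [D, Prod.mk.injEq] at h
    obtain ⟨h1, h2, h3⟩ := h
    have hr : r = r' := by linarith [h1, h2]
    subst hr
    have hr0 : (0:ℝ) < r := hp
    have hb : b = b' := by
      have h3' : 2 * π * r * b = 2 * π * r * b' := by linarith [h3]
      exact mul_left_cancel₀ (by positivity) h3'
    subst hb
    have : a = a' := by linarith [h1]
    subst this; rfl
  · ext ⟨t, x, y⟩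
    constructor
    · rintro ⟨⟨a, r, b⟩, hp, heq⟩
      rw [← heq]
      simpa [D, S] using hp
    · intro h
      have ht : (0:ℝ) < t - x := h
      refine ⟨⟨t - 2 * π^2 * (t-x) * (-(y / (2 * π * (t-x))))^2, t - x,
        -(y / (2 * π * (t-x)))⟩, ht, ?_⟩
      simp only [D, Prod.mk.injEq]
      have htx : t - x ≠ 0 := ne_of_gt ht
      refine ⟨by ring, by ring, ?_⟩
      field_simp
  · rintro ⟨a, r, b⟩ hp vτ vr vθ
    simp only
    ring
end

section
/- For λ > 0, let h_λ be the linear hyperbolic isometry of Minkowski space with eigenvalue λ on the lightlike line ℝ·(1,1,0), eigenvalue 1/λ on ℝ·(1,-1,0), and eigenvalue 1 on ℝ·(0,0,1). Pulling back the BTZ coordinates (τ,r,θ) via conjugation by h_λ transforms the metric -2dτdr + dr² + r²dθ² into -2dτdr + dr² + λ²r²dθ². Consequently, for every λ > 0, (ℝ × (0,∞) × ℝ/2πℤ, -2dτdr + dr² + λ²r²dθ²) is isometric to the regular part of 𝔼^{1,2}_0. -/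
open Real

/-- Pulling back BTZ coordinates by the hyperbolic isometry `h_λ` (eigenvalues `λ, 1/λ, 1` on
`(1,1,0), (1,-1,0), (0,0,1)`) transforms `-2dτdr + dr² + r²dθ²` into
`-2dτdr + dr² + λ²r²dθ²`; hence the latter metric is isometric to the regular part of
`𝔼^{1,2}_0`. -/
theorem btz_angle_rescaling (l : ℝ) (hl : 0 < l) :
    let h : ℝ × ℝ × ℝ → ℝ × ℝ × ℝ := fun v =>
      (l * ((v.1 + v.2.1) / 2) + (1 / l) * ((v.1 - v.2.1) / 2),
       l * ((v.1 + v.2.1) / 2) - (1 / l) * ((v.1 - v.2.1) / 2),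
       v.2.2)
    (h (1, 1, 0) = l • ((1 : ℝ), (1 : ℝ), (0 : ℝ)))
    ∧ (h (1, -1, 0) = l⁻¹ • ((1 : ℝ), (-1 : ℝ), (0 : ℝ)))
    ∧ (h (0, 0, 1) = (0, 0, 1))
    ∧ (∀ v : ℝ × ℝ × ℝ,
        -((h v).1)^2 + ((h v).2.1)^2 + ((h v).2.2)^2 = -(v.1)^2 + (v.2.1)^2 + (v.2.2)^2)
    ∧ ∃ F : ℝ × ℝ × ℝ → ℝ × ℝ × ℝ,
        ∃ F' : (ℝ × ℝ × ℝ) → (ℝ × ℝ × ℝ) →L[ℝ] (ℝ × ℝ × ℝ),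
        Function.Bijective F
        ∧ (∀ τ r θ : ℝ, F (τ, r, θ + 2 * π) = F (τ, r, θ) + (0, 0, 2 * π))
        ∧ (∀ p : ℝ × ℝ × ℝ, 0 < p.2.1 → 0 < (F p).2.1)
        ∧ (∀ p, HasFDerivAt F (F' p) p)
        ∧ ∀ p : ℝ × ℝ × ℝ, 0 < p.2.1 → ∀ v : ℝ × ℝ × ℝ,
            -2 * (F' p v).1 * (F' p v).2.1 + ((F' p v).2.1)^2
              + ((F p).2.1)^2 * ((F' p v).2.2)^2
            = -2 * v.1 * v.2.1 + (v.2.1)^2 + l^2 * (p.2.1)^2 * (v.2.2)^2 := by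
  intro h
  have hl' : l ≠ 0 := ne_of_gt hl
  set c : ℝ := (l ^ 2 - 1) / (2 * l) with hc
  set L : (ℝ × ℝ × ℝ) →ₗ[ℝ] (ℝ × ℝ × ℝ) :=
    { toFun := fun v => (v.1 / l + c * v.2.1, l * v.2.1, v.2.2)
      map_add' := by intro a b; simp [Prod.ext_iff] <;> constructor <;> ring
      map_smul' := by intro m a; simp [Prod.ext_iff, Prod.smul_def, smul_eq_mul] <;> constructor <;> ring } with hL
  refine ⟨?_, ?_, ?_, ?_, ⟨fun p => L p, fun _ => L.toContinuousLinearMap, ?_, ?_, ?_, ?_, ?_⟩⟩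
  · simp [h, Prod.ext_iff, Prod.smul_def, smul_eq_mul] <;> constructor <;> field_simp
  · simp [h, Prod.ext_iff, Prod.smul_def, smul_eq_mul] <;> constructor <;> field_simp
  · simp [h]
  · intro v; simp only [h]; field_simp; ring
  · rw [Function.bijective_iff_has_inverse]
    refine ⟨fun w => (l * (w.1 - c * (w.2.1 / l)), w.2.1 / l, w.2.2), ?_, ?_⟩
    · intro p; simp [hL, Prod.ext_iff] <;> constructor <;> field_simp <;> ring
    · intro p; simp [hL, Prod.ext_iff] <;> constructor <;> field_simp <;> ring
  · intro τ r θ; simp [hL, Prod.ext_iff]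
  · intro p hp; simp [hL]; positivity
  · intro p; exact L.toContinuousLinearMap.hasFDerivAt
  · intro p hp v
    simp only [hL, LinearMap.coe_toContinuousLinearMap', LinearMap.coe_mk, AddHom.coe_mk]
    rw [hc]
    field_simp
    ring
end
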